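/- Under the stated setup, the conditional mutual information of X_{k₀} and Y given X_{k₁} equals the mutual information between (X_{k₀}, X_{k₁}) and Y: I(X_{k₀}; Y ∣ X_{k₁}) = ((m-1)/m)·log( m/(m-1) ) + (1/m)·log m, where I(X_{k₀}; Y ∣ X_{k₁}) = ∑_{x₂=1}^{m} P(X_{k₁}=x₂) ∑_{x₁=1}^{m} ∑_{y∈{0,1}} P(X_{k₀}=x₁, Y=y ∣ X_{k₁}=x₂) · log( P(X_{k₀}=x₁, Y=y ∣ X_{k₁}=x₂) / ( P(X_{k₀}=x₁ ∣ X_{k₁}=x₂) · P(Y=y ∣ X_{k₁}=x₂) ) ), with the convention that summands with zero joint conditional probability are 0. -/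

import Mathlib

open MeasureTheory ProbabilityTheory
open Real

/-! Given `X k₁ = b`, independence leaves `X k₀` uniform, and `Y` becomes the function
`1[X k₀ = b]` of it. The mutual information of a variable and a function of it is the entropy of
that function, here of a Bernoulli(1/m) variable, which is the right-hand side for every `b`. -/

noncomputable def discreteMutualInfo {Ω α β : Type*} [MeasurableSpace Ω] [Fintype α]
    (ν : Measure Ω) (U : Ω → α) (Y : Ω → β) (t : Finset β) : ℝ :=
  ∑ x, ∑ y ∈ t, ν.real ({ω | U ω = x} ∩ {ω | Y ω = y}) *
    log (ν.real ({ω | U ω = x} ∩ {ω | Y ω = y}) / (ν.real {ω | U ω = x} * ν.real {ω | Y ω = y}))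

theorem sum_sum_ite_mul_log_div {ι κ : Type*} [DecidableEq κ] (s : Finset ι) (t : Finset κ)
    (g : ι → κ) (hg : ∀ i ∈ s, g i ∈ t) (q : ι → ℝ) (r : κ → ℝ) :
    ∑ i ∈ s, ∑ y ∈ t, (if g i = y then q i else 0) *
        log ((if g i = y then q i else 0) / (q i * r y)) =
      -∑ i ∈ s, q i * log (r (g i)) := by
  rw [← Finset.sum_neg_distrib]
  refine Finset.sum_congr rfl fun i hi => ?_
  have hterm : ∀ y, (if g i = y then q i else 0) * log ((if g i = y then q i else 0) / (q i * r y))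
      = if g i = y then q i * log (q i / (q i * r y)) else 0 := fun y => by
    split_ifs <;> simp
  simp_rw [hterm, Finset.sum_ite_eq, if_pos (hg i hi)]
  rcases eq_or_ne (q i) 0 with hq | hq
  · simp [hq]
  · rw [div_mul_cancel_left₀ hq, log_inv, mul_neg]

theorem ProbabilityTheory.IndepFun.cond_preimage {Ω α β : Type*} [MeasurableSpace Ω]
    [MeasurableSpace α] [MeasurableSpace β] {μ : Measure Ω} [IsFiniteMeasure μ] {U : Ω → α}
    {V : Ω → β} (hUV : IndepFun U V μ) (hV : Measurable V)
    {S : Set α} {T : Set β} (hS : MeasurableSet S) (hT : MeasurableSet T)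
    (hT0 : μ (V ⁻¹' T) ≠ 0) : μ[U ⁻¹' S | V ⁻¹' T] = μ (U ⁻¹' S) := by
  rw [cond_apply (hV hT), Set.inter_comm, hUV.measure_inter_preimage_eq_mul _ _ hS hT,
    mul_comm, mul_assoc, ENNReal.mul_inv_cancel hT0 (measure_ne_top _ _), mul_one]

section

variable {Ω α β : Type*} [MeasurableSpace Ω] [Fintype α]

theorem discreteMutualInfo_congr {ν : Measure Ω} (U : Ω → α) {Y Y' : Ω → β} (h : Y =ᵐ[ν] Y')
    (t : Finset β) : discreteMutualInfo ν U Y t = discreteMutualInfo ν U Y' t := by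
  have hset : ∀ y, {ω | Y ω = y} =ᵐ[ν] {ω | Y' ω = y} := fun y => by
    filter_upwards [h] with ω hω
    change (Y ω = y) = (Y' ω = y)
    rw [hω]
  simp only [discreteMutualInfo, measureReal_congr (hset _),
    measureReal_congr ((Filter.EventuallyEq.refl _ _).inter (hset _))]

theorem discreteMutualInfo_comp_self [DecidableEq β] (ν : Measure Ω) (U : Ω → α) (g : α → β)
    (t : Finset β) (hg : ∀ a, g a ∈ t) :
    discreteMutualInfo ν U (fun ω => g (U ω)) t =
      -∑ a, ν.real {ω | U ω = a} * log (ν.real {ω | g (U ω) = g a}) := by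
  have hjoint : ∀ a y, ν.real ({ω | U ω = a} ∩ {ω | g (U ω) = y}) =
      if g a = y then ν.real {ω | U ω = a} else 0 := fun a y => by
    split_ifs with h
    · congr 1
      ext ω
      simp only [Set.mem_inter_iff, Set.mem_ofPred_eq, and_iff_left_iff_imp]
      rintro rfl
      exact h
    · convert measureReal_empty (μ := ν)
      ext ω
      simp only [Set.mem_inter_iff, Set.mem_ofPred_eq, Set.mem_empty_iff_false, iff_false]
      rintro ⟨rfl, h'⟩
      exact h h'
  simp only [discreteMutualInfo, hjoint]
  exact sum_sum_ite_mul_log_div _ t g (fun a _ => hg a) _ (fun y => ν.real {ω | g (U ω) = y})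

theorem binEntropy_inv_card_eq_neg_sum [DecidableEq α] (b : α) :
    binEntropy (Fintype.card α : ℝ)⁻¹ =
      -∑ a, (Fintype.card α : ℝ)⁻¹ *
        log (if a = b then (Fintype.card α : ℝ)⁻¹ else 1 - (Fintype.card α : ℝ)⁻¹) := by
  set n := Fintype.card α
  set p := (n : ℝ)⁻¹
  have hcompl : ((n - 1 : ℕ) : ℝ) * p = 1 - p := by
    have hn : 0 < n := Fintype.card_pos_iff.2 ⟨b⟩
    rw [Nat.cast_sub hn, sub_mul, mul_inv_cancel₀ (Nat.cast_ne_zero.2 hn.ne'),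
      Nat.cast_one, one_mul]
  rw [Fintype.sum_eq_add_sum_compl b, if_pos rfl,
    Finset.sum_congr rfl fun a ha => by
      rw [if_neg (Finset.mem_compl.1 ha ∘ Finset.mem_singleton.2)],
    Finset.sum_const, Finset.card_compl, Finset.card_singleton, nsmul_eq_mul]
  simp only [binEntropy, log_inv]
  linear_combination log (1 - p) * hcompl

theorem discreteMutualInfo_cond_of_indepFun_uniform [DecidableEq α] [MeasurableSpace α]
    [MeasurableSingletonClass α] {μ : Measure Ω} [IsProbabilityMeasure μ] {U V : Ω → α}
    (hU : Measurable U) (hV : Measurable V) (hUV : IndepFun U V μ)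
    (hUunif : ∀ a, μ {ω | U ω = a} = 1 / Fintype.card α) {Y : Ω → ℕ}
    (hY : ∀ ω, Y ω = if U ω = V ω then 1 else 0) (b : α) (hb : μ {ω | V ω = b} ≠ 0) :
    discreteMutualInfo μ[|{ω | V ω = b}] U Y {0, 1} = binEntropy (Fintype.card α : ℝ)⁻¹ := by
  rw [binEntropy_inv_card_eq_neg_sum b]
  set n := Fintype.card α
  set p := (n : ℝ)⁻¹
  have hB : MeasurableSet {ω | V ω = b} := hV (measurableSet_singleton b)
  let g : α → ℕ := fun a => if a = b then 1 else 0
  have hYg : Y =ᵐ[μ[|{ω | V ω = b}]] fun ω => g (U ω) :=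
    ae_cond_of_forall_mem hB fun ω (hω : V ω = b) => by rw [hY, hω]
  rw [discreteMutualInfo_congr U hYg,
    discreteMutualInfo_comp_self _ U g _ fun a => by by_cases a = b <;> simp [g, *]]
  have hcond : ∀ S : Set α, MeasurableSet S →
      μ[|{ω | V ω = b}].real (U ⁻¹' S) = μ.real (U ⁻¹' S) := fun S hS => by
    have h := hUV.cond_preimage hV hS (measurableSet_singleton b) hb
    exact congrArg ENNReal.toReal h
  have hUa : ∀ a, μ.real (U ⁻¹' {a}) = p := fun a => by
    simp [p, measureReal_def, Set.preimage, hUunif]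
  have hq : ∀ a, μ[|{ω | V ω = b}].real {ω | U ω = a} = p := fun a =>
    (hcond {a} (measurableSet_singleton a)).trans (hUa a)
  have hr1 : μ[|{ω | V ω = b}].real {ω | g (U ω) = 1} = p := by
    have hset : {ω | g (U ω) = 1} = U ⁻¹' {b} := by ext; simp [g]
    rw [hset, hcond _ (measurableSet_singleton b), hUa]
  have hr0 : μ[|{ω | V ω = b}].real {ω | g (U ω) = 0} = 1 - p := by
    have hset : {ω | g (U ω) = 0} = (U ⁻¹' {b})ᶜ := by ext; simp [g]
    rw [hset, ← Set.preimage_compl, hcond _ (measurableSet_singleton b).compl, Set.preimage_compl,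
      probReal_compl_eq_one_sub (hU (measurableSet_singleton b)), hUa]
  refine congrArg Neg.neg (Finset.sum_congr rfl fun a _ => ?_)
  by_cases hab : a = b <;> simp only [hab, g, hq, hr1, hr0, if_true, if_false]

end

theorem binEntropy_inv_natCast {n : ℕ} (hn : n ≠ 0) :
    binEntropy (n : ℝ)⁻¹ = ((n : ℝ) - 1) / n * log ((n : ℝ) / ((n : ℝ) - 1)) + 1 / n * log n := by
  have hn' : (n : ℝ) ≠ 0 := Nat.cast_ne_zero.2 hn
  rw [binEntropy, inv_inv, ← one_div, one_sub_div hn', inv_div]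
  ring

theorem stmt_8_general
    {Ω : Type*} [MeasurableSpace Ω] (μ : Measure Ω) [IsProbabilityMeasure μ]
    (m d : ℕ) (hm : 2 ≤ m)
    (X : Fin d → Ω → Fin m)
    (hXmeas : ∀ i, Measurable (X i))
    (hXindep : iIndepFun X μ)
    (hXunif : ∀ (i : Fin d) (n : Fin m), μ {ω | X i ω = n} = 1 / m)
    (k₀ k₁ : Fin d) (hk : k₀ < k₁)
    (Y : Ω → ℕ)
    (hY : ∀ ω, Y ω = if X k₀ ω = X k₁ ω then 1 else 0) :
    ∑ x₂ : Fin m, (μ {ω | X k₁ ω = x₂}).toReal *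
        ∑ x₁ : Fin m, ∑ y ∈ ({0, 1} : Finset ℕ),
          (μ[{ω | X k₀ ω = x₁} ∩ {ω | Y ω = y} | {ω | X k₁ ω = x₂}]).toReal *
            Real.log
              ((μ[{ω | X k₀ ω = x₁} ∩ {ω | Y ω = y} | {ω | X k₁ ω = x₂}]).toReal /
                ((μ[{ω | X k₀ ω = x₁} | {ω | X k₁ ω = x₂}]).toReal *
                  (μ[{ω | Y ω = y} | {ω | X k₁ ω = x₂}]).toReal)) =
      ((m : ℝ) - 1) / m * Real.log ((m : ℝ) / ((m : ℝ) - 1))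
        + 1 / m * Real.log m := by
  have hm0 : m ≠ 0 := by omega
  have hinner : ∀ x₂, discreteMutualInfo μ[|{ω | X k₁ ω = x₂}] (X k₀) Y {0, 1} =
      binEntropy (m : ℝ)⁻¹ := fun x₂ => by
    simpa using discreteMutualInfo_cond_of_indepFun_uniform (hXmeas k₀) (hXmeas k₁)
      (hXindep.indepFun hk.ne) (by simpa using hXunif k₀) hY x₂ (by simp [hXunif])
  change ∑ x₂, μ.real {ω | X k₁ ω = x₂} *
    discreteMutualInfo μ[|{ω | X k₁ ω = x₂}] (X k₀) Y {0, 1} = _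
  simp only [hinner, measureReal_def, hXunif, ENNReal.toReal_div, ENNReal.toReal_one,
    ENNReal.toReal_natCast, Finset.sum_const, Finset.card_univ, Fintype.card_fin, nsmul_eq_mul]
  rw [← mul_assoc, mul_one_div_cancel (Nat.cast_ne_zero.2 hm0), one_mul, binEntropy_inv_natCast hm0]

/-- The conditional mutual information of `X_{k₀}` and `Y` given
`X_{k₁}` equals `((m-1)/m)·log(m/(m-1)) + (1/m)·log m`, where
`I(X_{k₀}; Y ∣ X_{k₁}) = ∑_{x₂} P(X_{k₁}=x₂) ∑_{x₁} ∑_{y∈{0,1}}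
P(X_{k₀}=x₁, Y=y ∣ X_{k₁}=x₂) · log(P(X_{k₀}=x₁, Y=y ∣ X_{k₁}=x₂) /
(P(X_{k₀}=x₁ ∣ X_{k₁}=x₂) · P(Y=y ∣ X_{k₁}=x₂)))`, with the convention that summands
with zero joint conditional probability are `0` (which holds automatically here). -/
theorem stmt_8
    {Ω : Type*} [MeasurableSpace Ω] (μ : Measure Ω) [IsProbabilityMeasure μ]
    (m d : ℕ) (hm : 2 ≤ m) (hd : 2 ≤ d)
    (X : Fin d → Ω → Fin m)
    (hXmeas : ∀ i, Measurable (X i))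
    (hXindep : iIndepFun X μ)
    (hXunif : ∀ (i : Fin d) (n : Fin m), μ {ω | X i ω = n} = 1 / m)
    (k₀ k₁ : Fin d) (hk : k₀ < k₁)
    (Y : Ω → ℕ)
    (hY : ∀ ω, Y ω = if X k₀ ω = X k₁ ω then 1 else 0) :
    ∑ x₂ : Fin m, (μ {ω | X k₁ ω = x₂}).toReal *
        ∑ x₁ : Fin m, ∑ y ∈ ({0, 1} : Finset ℕ),
          (μ[{ω | X k₀ ω = x₁} ∩ {ω | Y ω = y} | {ω | X k₁ ω = x₂}]).toReal *
            Real.log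
              ((μ[{ω | X k₀ ω = x₁} ∩ {ω | Y ω = y} | {ω | X k₁ ω = x₂}]).toReal /
                ((μ[{ω | X k₀ ω = x₁} | {ω | X k₁ ω = x₂}]).toReal *
                  (μ[{ω | Y ω = y} | {ω | X k₁ ω = x₂}]).toReal)) =
      ((m : ℝ) - 1) / m * Real.log ((m : ℝ) / ((m : ℝ) - 1))
        + 1 / m * Real.log m :=
  stmt_8_general μ m d hm X hXmeas hXindep hXunif k₀ k₁ hk Y hY
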